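/- arXiv:2206.09389 — 4 statements merged into one kernel-verified Lean document; each statement's English description precedes it below -/
import Mathlib

section
/- Every disjunction-free separation logic formula is equivalent to a symbolic heap, and more generally every formula is equivalent to a finite disjunction of symbolic heaps: for every formula φ there exist symbolic heaps (prenex disjunction-free formulas) ψ₁, …, ψ_n such that for all structures (s,h), (s,h) ⊨ φ iff (s,h) ⊨ ψᵢ for some i. -/
/-- Heaps: finite partial functions from locations to κ-tuples of locations. -/
abbrev Heap (L : Type) (κ : ℕ) := Finmap (fun _ : L => Fin κ → L)

/-- Deep embedding of (predicate-free) separation logic formulas. -/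
inductive SLF (V : Type) (κ : ℕ) : Type where
  | emp : SLF V κ
  | pts (x : V) (ys : Fin κ → V) : SLF V κ
  | eq (x y : V) : SLF V κ
  | neq (x y : V) : SLF V κ
  | star (φ ψ : SLF V κ) : SLF V κ
  | disj (φ ψ : SLF V κ) : SLF V κ
  | ex (x : V) (φ : SLF V κ) : SLF V κ

variable {V L : Type} {κ : ℕ}

/-- Satisfaction relation for separation logic. -/
def Sat [DecidableEq V] [DecidableEq L] (s : V → L) (h : Heap L κ) :
    SLF V κ → Prop
  | .emp => h = ∅
  | .pts x ys => h = Finmap.singleton (s x) (fun i => s (ys i))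
  | .eq x y => h = ∅ ∧ s x = s y
  | .neq x y => h = ∅ ∧ s x ≠ s y
  | .star φ ψ =>
      ∃ h₁ h₂ : Heap L κ, h₁.Disjoint h₂ ∧ h = h₁ ∪ h₂ ∧
        Sat s h₁ φ ∧ Sat s h₂ ψ
  | .disj φ ψ => Sat s h φ ∨ Sat s h ψ
  | .ex x φ => ∃ ℓ : L, Sat (Function.update s x ℓ) h φ

/-- Free variables of a formula. -/
def fv : SLF V κ → Set V
  | .emp => ∅
  | .pts x ys => insert x (Set.range ys)
  | .eq x y => {x, y}
  | .neq x y => {x, y}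
  | .star φ ψ => fv φ ∪ fv ψ
  | .disj φ ψ => fv φ ∪ fv ψ
  | .ex x φ => fv φ \ {x}

/-- Quantifier-free and disjunction-free formulas (separating conjunctions of
atoms). -/
inductive IsQFConj : SLF V κ → Prop
  | emp : IsQFConj .emp
  | pts (x : V) (ys : Fin κ → V) : IsQFConj (.pts x ys)
  | eq (x y : V) : IsQFConj (.eq x y)
  | neq (x y : V) : IsQFConj (.neq x y)
  | star {φ ψ : SLF V κ} : IsQFConj φ → IsQFConj ψ → IsQFConj (.star φ ψ)

/-- Symbolic heaps: prenex disjunction-free formulas, i.e. `∃x⃗.ψ` where `ψ`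
is a separating conjunction of atoms. -/
inductive IsSymbolicHeap : SLF V κ → Prop
  | base {φ : SLF V κ} : IsQFConj φ → IsSymbolicHeap φ
  | ex (x : V) {φ : SLF V κ} : IsSymbolicHeap φ → IsSymbolicHeap (.ex x φ)


-- auxiliary definitions and lemmas

/-- All variables (free and bound) occurring in a formula, as a `Finset`. -/
def allv [DecidableEq V] : SLF V κ → Finset V
  | .emp => ∅
  | .pts x ys => insert x (Finset.image ys Finset.univ)
  | .eq x y => {x, y}
  | .neq x y => {x, y}
  | .star φ ψ => allv φ ∪ allv ψ
  | .disj φ ψ => allv φ ∪ allv ψ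
  | .ex x φ => insert x (allv φ)

/-- Bound variables of a formula. -/
def bv [DecidableEq V] : SLF V κ → Finset V
  | .star φ ψ => bv φ ∪ bv ψ
  | .disj φ ψ => bv φ ∪ bv ψ
  | .ex x φ => insert x (bv φ)
  | _ => ∅

lemma fv_subset_allv [DecidableEq V] : ∀ φ : SLF V κ, fv φ ⊆ ↑(allv φ)
  | .emp => by simp [fv, allv]
  | .pts x ys => by
      simp only [fv, allv]
      intro v hv
      rcases hv with rfl | ⟨i, rfl⟩ <;> simp
  | .eq x y => by intro v hv; simpa [allv, fv] using hv
  | .neq x y => by intro v hv; simpa [allv, fv] using hv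
  | .star φ ψ => by
      simp only [fv, allv, Finset.coe_union]
      exact Set.union_subset_union (fv_subset_allv φ) (fv_subset_allv ψ)
  | .disj φ ψ => by
      simp only [fv, allv, Finset.coe_union]
      exact Set.union_subset_union (fv_subset_allv φ) (fv_subset_allv ψ)
  | .ex x φ => by
      intro v hv
      simp only [fv, Set.mem_diff] at hv
      have := fv_subset_allv φ hv.1
      simp only [allv, Finset.coe_insert, Set.mem_insert_iff]
      exact Or.inr this

/-- The coincidence lemma: satisfaction only depends on free variables. -/
lemma sat_coincide [DecidableEq V] [DecidableEq L] :
    ∀ (φ : SLF V κ) (s s' : V → L), (∀ v ∈ fv φ, s v = s' v) →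
      ∀ h : Heap L κ, (Sat s h φ ↔ Sat s' h φ)
  | .emp, s, s', ag, h => Iff.rfl
  | .pts x ys, s, s', ag, h => by
      have hx : s x = s' x := ag x (by simp [fv])
      have hys : (fun i => s (ys i)) = fun i => s' (ys i) :=
        funext fun i => ag _ (by simp only [fv, Set.mem_insert_iff]; exact Or.inr ⟨i, rfl⟩)
      simp only [Sat, hx, hys]
  | .eq x y, s, s', ag, h => by
      have hx : s x = s' x := ag x (by simp [fv])
      have hy : s y = s' y := ag y (by simp [fv])
      simp only [Sat, hx, hy]
  | .neq x y, s, s', ag, h => by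
      have hx : s x = s' x := ag x (by simp [fv])
      have hy : s y = s' y := ag y (by simp [fv])
      simp only [Sat, hx, hy]
  | .star φ ψ, s, s', ag, h => by
      have h1 := fun h₁ => sat_coincide φ s s' (fun v hv => ag v (Or.inl hv)) h₁
      have h2 := fun h₂ => sat_coincide ψ s s' (fun v hv => ag v (Or.inr hv)) h₂
      simp only [Sat]
      constructor
      · rintro ⟨h₁, h₂, hd, rfl, hφ, hψ⟩
        exact ⟨h₁, h₂, hd, rfl, (h1 h₁).mp hφ, (h2 h₂).mp hψ⟩
      · rintro ⟨h₁, h₂, hd, rfl, hφ, hψ⟩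
        exact ⟨h₁, h₂, hd, rfl, (h1 h₁).mpr hφ, (h2 h₂).mpr hψ⟩
  | .disj φ ψ, s, s', ag, h => by
      simp only [Sat]
      exact or_congr (sat_coincide φ s s' (fun v hv => ag v (Or.inl hv)) h)
        (sat_coincide ψ s s' (fun v hv => ag v (Or.inr hv)) h)
  | .ex x φ, s, s', ag, h => by
      simp only [Sat]
      refine exists_congr fun ℓ => sat_coincide φ _ _ (fun v hv => ?_) h
      by_cases hvx : v = x
      · simp [hvx, Function.update]
      · simp only [Function.update, dif_neg hvx]
        exact ag v ⟨hv, hvx⟩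

/-- Rename free occurrences of `x` to `z` (capture-naive: we only use it with
`z` fresh). -/
def rn [DecidableEq V] (x z : V) : SLF V κ → SLF V κ
  | .emp => .emp
  | .pts a ys => .pts (if a = x then z else a) (fun i => if ys i = x then z else ys i)
  | .eq a b => .eq (if a = x then z else a) (if b = x then z else b)
  | .neq a b => .neq (if a = x then z else a) (if b = x then z else b)
  | .star φ ψ => .star (rn x z φ) (rn x z ψ)
  | .disj φ ψ => .disj (rn x z φ) (rn x z ψ)
  | .ex y φ => if y = x then .ex y φ else .ex y (rn x z φ)

lemma bv_rn [DecidableEq V] (x z : V) : ∀ φ : SLF V κ, bv (rn x z φ) = bv φ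
  | .emp => rfl
  | .pts _ _ => rfl
  | .eq _ _ => rfl
  | .neq _ _ => rfl
  | .star φ ψ => by simp [rn, bv, bv_rn x z φ, bv_rn x z ψ]
  | .disj φ ψ => by simp [rn, bv, bv_rn x z φ, bv_rn x z ψ]
  | .ex y φ => by
      by_cases hy : y = x
      · simp [rn, hy]
      · simp [rn, hy, bv, bv_rn x z φ]

lemma rn_qf [DecidableEq V] (x z : V) {φ : SLF V κ} (H : IsQFConj φ) :
    IsQFConj (rn x z φ) := by
  induction H with
  | emp => exact .emp
  | pts a ys => exact .pts _ _
  | eq a b => exact .eq _ _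
  | neq a b => exact .neq _ _
  | star _ _ ih1 ih2 => exact .star ih1 ih2

lemma rn_sh [DecidableEq V] (x z : V) {φ : SLF V κ} (H : IsSymbolicHeap φ) :
    IsSymbolicHeap (rn x z φ) := by
  induction H with
  | base h => exact .base (rn_qf x z h)
  | @ex y φ _ ih =>
      by_cases hy : y = x
      · simp only [rn, if_pos hy]
        exact .ex y ‹IsSymbolicHeap φ›
      · simp only [rn, if_neg hy]
        exact .ex y ih

lemma update_apply_ite [DecidableEq V] [DecidableEq L] (s : V → L) (x z a : V) :
    s (if a = x then z else a) = Function.update s x (s z) a := by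
  by_cases h : a = x <;> simp [h, Function.update]

/-- Semantics of renaming, for `z` not occurring in `φ`. -/
lemma sat_rn [DecidableEq V] [DecidableEq L] (x z : V) :
    ∀ φ : SLF V κ, z ∉ allv φ → ∀ (s : V → L) (h : Heap L κ),
      (Sat s h (rn x z φ) ↔ Sat (Function.update s x (s z)) h φ)
  | .emp, _, s, h => Iff.rfl
  | .pts a ys, _, s, h => by
      simp only [rn, Sat, update_apply_ite]
  | .eq a b, _, s, h => by simp only [rn, Sat, update_apply_ite]
  | .neq a b, _, s, h => by simp only [rn, Sat, update_apply_ite]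
  | .star φ ψ, hz, s, h => by
      simp only [allv, Finset.mem_union, not_or] at hz
      simp only [rn, Sat]
      constructor
      · rintro ⟨h₁, h₂, hd, rfl, hφ, hψ⟩
        exact ⟨h₁, h₂, hd, rfl, (sat_rn x z φ hz.1 s h₁).mp hφ,
          (sat_rn x z ψ hz.2 s h₂).mp hψ⟩
      · rintro ⟨h₁, h₂, hd, rfl, hφ, hψ⟩
        exact ⟨h₁, h₂, hd, rfl, (sat_rn x z φ hz.1 s h₁).mpr hφ,
          (sat_rn x z ψ hz.2 s h₂).mpr hψ⟩
  | .disj φ ψ, hz, s, h => by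
      simp only [allv, Finset.mem_union, not_or] at hz
      simp only [rn, Sat]
      exact or_congr (sat_rn x z φ hz.1 s h) (sat_rn x z ψ hz.2 s h)
  | .ex y φ, hz, s, h => by
      simp only [allv, Finset.mem_insert, not_or] at hz
      obtain ⟨hzy, hzφ⟩ := hz
      by_cases hy : y = x
      · subst hy
        simp only [rn, if_pos rfl, Sat]
        refine exists_congr fun ℓ => ?_
        rw [Function.update_idem]
      · simp only [rn, if_neg hy, Sat]
        refine exists_congr fun ℓ => ?_
        rw [sat_rn x z φ hzφ]
        have h1 : Function.update s y ℓ z = s z := by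
          simp only [Function.update, dif_neg hzy]
        rw [h1]
        have h2 : Function.update (Function.update s y ℓ) x (s z)
            = Function.update (Function.update s x (s z)) y ℓ :=
          Function.update_comm hy _ _ _
        rw [h2]

lemma qf_bv [DecidableEq V] {φ : SLF V κ} (H : IsQFConj φ) : bv φ = ∅ := by
  induction H with
  | emp => rfl
  | pts a ys => rfl
  | eq a b => rfl
  | neq a b => rfl
  | star _ _ ih1 ih2 => simp [bv, ih1, ih2]

/-- Bound variables of a symbolic heap can be renamed away from any finite set. -/
lemma freshen [DecidableEq V] [DecidableEq L] [Infinite V] {ψ : SLF V κ}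
    (H : IsSymbolicHeap ψ) (A : Finset V) :
    ∃ ψ' : SLF V κ, IsSymbolicHeap ψ' ∧ (∀ a ∈ bv ψ', a ∉ A) ∧
      ∀ (s : V → L) (h : Heap L κ), Sat s h ψ' ↔ Sat s h ψ := by
  induction H with
  | base hq =>
      exact ⟨_, .base hq, by simp [qf_bv hq], fun _ _ => Iff.rfl⟩
  | @ex x ψ0 H0 ih =>
      obtain ⟨ψ0', hsh, hbv, heq⟩ := ih
      obtain ⟨z, hz⟩ := Infinite.exists_notMem_finset (A ∪ allv ψ0')
      simp only [Finset.mem_union, not_or] at hz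
      refine ⟨.ex z (rn x z ψ0'), .ex z (rn_sh x z hsh), ?_, ?_⟩
      · intro a ha
        simp only [bv, bv_rn, Finset.mem_insert] at ha
        rcases ha with rfl | ha
        · exact hz.1
        · exact hbv a ha
      · intro s h
        simp only [Sat]
        refine exists_congr fun ℓ => ?_
        rw [sat_rn x z ψ0' hz.2, Function.update_self, ← heq]
        refine sat_coincide ψ0' _ _ (fun v hv => ?_) h
        by_cases hvx : v = x
        · subst hvx; simp
        · have hvz : v ≠ z := fun hvz => hz.2 (fv_subset_allv ψ0' (hvz ▸ hv))
          simp [Function.update, hvx, hvz]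

/-- Pull the quantifiers of a symbolic heap out of a star with a
quantifier-free left conjunct (assuming no capture). -/
lemma pull_right [DecidableEq V] [DecidableEq L] {ψ : SLF V κ}
    (H : IsSymbolicHeap ψ) (φ₁ : SLF V κ) (Q : IsQFConj φ₁)
    (hd : ∀ a ∈ bv ψ, a ∉ fv φ₁) :
    ∃ χ : SLF V κ, IsSymbolicHeap χ ∧
      ∀ (s : V → L) (h : Heap L κ), Sat s h (.star φ₁ ψ) ↔ Sat s h χ := by
  induction H with
  | base hq => exact ⟨_, .base (.star Q hq), fun _ _ => Iff.rfl⟩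
  | @ex x ψ0 H0 ih =>
      have hx : x ∉ fv φ₁ := hd x (by simp [bv])
      obtain ⟨χ0, hsh, heq⟩ := ih (fun a ha => hd a (by simp [bv, ha]))
      refine ⟨.ex x χ0, .ex x hsh, fun s h => ?_⟩
      simp only [Sat]
      constructor
      · rintro ⟨h₁, h₂, hdisj, rfl, hφ, ℓ, hψ⟩
        refine ⟨ℓ, ?_⟩
        rw [← heq]
        refine ⟨h₁, h₂, hdisj, rfl, ?_, hψ⟩
        refine (sat_coincide φ₁ s _ (fun v hv => ?_) h₁).mp hφ
        have : v ≠ x := fun hvx => hx (hvx ▸ hv)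
        simp [Function.update, this]
      · rintro ⟨ℓ, hχ⟩
        rw [← heq] at hχ
        obtain ⟨h₁, h₂, hdisj, rfl, hφ, hψ⟩ := hχ
        refine ⟨h₁, h₂, hdisj, rfl, ?_, ℓ, hψ⟩
        refine (sat_coincide φ₁ _ s (fun v hv => ?_) h₁).mp hφ
        have : v ≠ x := fun hvx => hx (hvx ▸ hv)
        simp [Function.update, this]

/-- Star of two symbolic heaps, left one having non-capturing bound variables. -/
lemma pull_left [DecidableEq V] [DecidableEq L] [Infinite V] {ψ₁ : SLF V κ}
    (H1 : IsSymbolicHeap ψ₁) (ψ₂ : SLF V κ) (H2 : IsSymbolicHeap ψ₂)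
    (hd : ∀ a ∈ bv ψ₁, a ∉ fv ψ₂) :
    ∃ χ : SLF V κ, IsSymbolicHeap χ ∧
      ∀ (s : V → L) (h : Heap L κ), Sat s h (.star ψ₁ ψ₂) ↔ Sat s h χ := by
  induction H1 with
  | @base φ₁ hq =>
      obtain ⟨ψ₂', hsh2, hbv2, heq2⟩ := freshen (L := L) H2 (allv φ₁)
      obtain ⟨χ, hsh, heq⟩ := pull_right (L := L) hsh2 φ₁ hq
        (fun a ha hmem => hbv2 a ha (fv_subset_allv φ₁ hmem))
      refine ⟨χ, hsh, fun s h => ?_⟩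
      rw [← heq]
      simp only [Sat]
      constructor
      · rintro ⟨h₁, h₂, hdisj, rfl, hφ, hψ⟩
        exact ⟨h₁, h₂, hdisj, rfl, hφ, (heq2 s h₂).mpr hψ⟩
      · rintro ⟨h₁, h₂, hdisj, rfl, hφ, hψ⟩
        exact ⟨h₁, h₂, hdisj, rfl, hφ, (heq2 s h₂).mp hψ⟩
  | @ex x ψ0 H0 ih =>
      have hx : x ∉ fv ψ₂ := hd x (by simp [bv])
      obtain ⟨χ0, hsh, heq⟩ := ih (fun a ha => hd a (by simp [bv, ha]))
      refine ⟨.ex x χ0, .ex x hsh, fun s h => ?_⟩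
      simp only [Sat]
      constructor
      · rintro ⟨h₁, h₂, hdisj, rfl, ⟨ℓ, hψ0⟩, hψ⟩
        refine ⟨ℓ, ?_⟩
        rw [← heq]
        refine ⟨h₁, h₂, hdisj, rfl, hψ0, ?_⟩
        refine (sat_coincide ψ₂ s _ (fun v hv => ?_) h₂).mp hψ
        have : v ≠ x := fun hvx => hx (hvx ▸ hv)
        simp [Function.update, this]
      · rintro ⟨ℓ, hχ⟩
        rw [← heq] at hχ
        obtain ⟨h₁, h₂, hdisj, rfl, hψ0, hψ⟩ := hχ
        refine ⟨h₁, h₂, hdisj, rfl, ⟨ℓ, hψ0⟩, ?_⟩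
        refine (sat_coincide ψ₂ _ s (fun v hv => ?_) h₂).mp hψ
        have : v ≠ x := fun hvx => hx (hvx ▸ hv)
        simp [Function.update, this]

/-- The star of two symbolic heaps is equivalent to a symbolic heap. -/
lemma star_sh [DecidableEq V] [DecidableEq L] [Infinite V] {ψ₁ ψ₂ : SLF V κ}
    (H1 : IsSymbolicHeap ψ₁) (H2 : IsSymbolicHeap ψ₂) :
    ∃ χ : SLF V κ, IsSymbolicHeap χ ∧
      ∀ (s : V → L) (h : Heap L κ), Sat s h (.star ψ₁ ψ₂) ↔ Sat s h χ := by
  obtain ⟨ψ₁', hsh1, hbv1, heq1⟩ := freshen (L := L) H1 (allv ψ₂)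
  obtain ⟨χ, hsh, heq⟩ := pull_left (L := L) hsh1 ψ₂ H2
    (fun a ha hmem => hbv1 a ha (fv_subset_allv ψ₂ hmem))
  refine ⟨χ, hsh, fun s h => ?_⟩
  rw [← heq]
  simp only [Sat]
  constructor
  · rintro ⟨h₁, h₂, hdisj, rfl, hφ, hψ⟩
    exact ⟨h₁, h₂, hdisj, rfl, (heq1 s h₁).mpr hφ, hψ⟩
  · rintro ⟨h₁, h₂, hdisj, rfl, hφ, hψ⟩
    exact ⟨h₁, h₂, hdisj, rfl, (heq1 s h₁).mp hφ, hψ⟩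

lemma star_list_inner [DecidableEq V] [DecidableEq L] [Infinite V]
    {a : SLF V κ} (ha : IsSymbolicHeap a) :
    ∀ l2 : List (SLF V κ), (∀ ψ ∈ l2, IsSymbolicHeap ψ) →
      ∃ la : List (SLF V κ), (∀ ψ ∈ la, IsSymbolicHeap ψ) ∧
        ∀ (s : V → L) (h : Heap L κ),
          (∃ ψ ∈ la, Sat s h ψ) ↔ ∃ ψ₂ ∈ l2, Sat s h (.star a ψ₂)
  | [], _ => ⟨[], by simp, by simp⟩
  | b :: l2, hall => by
      obtain ⟨la', hsh', heq'⟩ := star_list_inner ha l2 (fun ψ hψ => hall ψ (by simp [hψ]))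
      obtain ⟨χ, hχ, heqχ⟩ := star_sh (L := L) ha (hall b (by simp))
      refine ⟨χ :: la', ?_, fun s h => ?_⟩
      · intro ψ hψmem
        rcases List.mem_cons.mp hψmem with rfl | hψ
        · exact hχ
        · exact hsh' ψ hψ
      · simp only [List.mem_cons, exists_eq_or_imp]
        rw [heq' s h, ← heqχ s h]

lemma star_list [DecidableEq V] [DecidableEq L] [Infinite V] :
    ∀ l1 : List (SLF V κ), (∀ ψ ∈ l1, IsSymbolicHeap ψ) →
      ∀ l2 : List (SLF V κ), (∀ ψ ∈ l2, IsSymbolicHeap ψ) →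
      ∃ l : List (SLF V κ), (∀ ψ ∈ l, IsSymbolicHeap ψ) ∧
        ∀ (s : V → L) (h : Heap L κ),
          (∃ ψ ∈ l, Sat s h ψ) ↔ ∃ ψ₁ ∈ l1, ∃ ψ₂ ∈ l2, Sat s h (.star ψ₁ ψ₂)
  | [], _, l2, _ => ⟨[], by simp, by simp⟩
  | a :: l1, hall, l2, hall2 => by
      obtain ⟨l', hsh', heq'⟩ := star_list l1 (fun ψ hψ => hall ψ (by simp [hψ])) l2 hall2
      obtain ⟨la, hsha, heqa⟩ := star_list_inner (L := L) (hall a (by simp)) l2 hall2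
      refine ⟨la ++ l', ?_, fun s h => ?_⟩
      · intro ψ hψ
        rcases List.mem_append.mp hψ with hψ | hψ
        · exact hsha ψ hψ
        · exact hsh' ψ hψ
      · simp only [List.mem_append, List.mem_cons, exists_eq_or_imp]
        constructor
        · rintro ⟨ψ, hψ | hψ, hs⟩
          · exact Or.inl ((heqa s h).mp ⟨ψ, hψ, hs⟩)
          · exact Or.inr ((heq' s h).mp ⟨ψ, hψ, hs⟩)
        · rintro (hs | hs)
          · obtain ⟨ψ, hψ, hs⟩ := (heqa s h).mpr hs
            exact ⟨ψ, Or.inl hψ, hs⟩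
          · obtain ⟨ψ, hψ, hs⟩ := (heq' s h).mpr hs
            exact ⟨ψ, Or.inr hψ, hs⟩

/-- Every formula is equivalent to a finite disjunction of symbolic heaps. -/
theorem disjunction_of_symbolic_heaps [DecidableEq V] [DecidableEq L]
    [Infinite V] [Nonempty L] (φ : SLF V κ) :
    ∃ ψs : List (SLF V κ), (∀ ψ ∈ ψs, IsSymbolicHeap ψ) ∧
      ∀ (s : V → L) (h : Heap L κ),
        Sat s h φ ↔ ∃ ψ ∈ ψs, Sat s h ψ := by
  induction φ with
  | emp => exact ⟨[.emp], by simp [IsSymbolicHeap.base, IsQFConj.emp], by simp⟩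
  | pts x ys =>
      exact ⟨[.pts x ys], by simp [IsSymbolicHeap.base, IsQFConj.pts], by simp⟩
  | eq x y => exact ⟨[.eq x y], by simp [IsSymbolicHeap.base, IsQFConj.eq], by simp⟩
  | neq x y => exact ⟨[.neq x y], by simp [IsSymbolicHeap.base, IsQFConj.neq], by simp⟩
  | star φ ψ ih1 ih2 =>
      obtain ⟨l1, hsh1, heq1⟩ := ih1
      obtain ⟨l2, hsh2, heq2⟩ := ih2
      obtain ⟨l, hsh, heq⟩ := star_list (L := L) l1 hsh1 l2 hsh2
      refine ⟨l, hsh, fun s h => ?_⟩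
      rw [heq s h]
      simp only [Sat]
      constructor
      · rintro ⟨h₁, h₂, hd, rfl, hφ, hψ⟩
        obtain ⟨ψ₁, hψ₁, hs1⟩ := (heq1 s h₁).mp hφ
        obtain ⟨ψ₂, hψ₂, hs2⟩ := (heq2 s h₂).mp hψ
        exact ⟨ψ₁, hψ₁, ψ₂, hψ₂, h₁, h₂, hd, rfl, hs1, hs2⟩
      · rintro ⟨ψ₁, hψ₁, ψ₂, hψ₂, h₁, h₂, hd, rfl, hs1, hs2⟩
        exact ⟨h₁, h₂, hd, rfl, (heq1 s h₁).mpr ⟨ψ₁, hψ₁, hs1⟩,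
          (heq2 s h₂).mpr ⟨ψ₂, hψ₂, hs2⟩⟩
  | disj φ ψ ih1 ih2 =>
      obtain ⟨l1, hsh1, heq1⟩ := ih1
      obtain ⟨l2, hsh2, heq2⟩ := ih2
      refine ⟨l1 ++ l2, ?_, fun s h => ?_⟩
      · intro ψ' hψ'
        rcases List.mem_append.mp hψ' with hψ' | hψ'
        · exact hsh1 ψ' hψ'
        · exact hsh2 ψ' hψ'
      · simp only [Sat, heq1 s h, heq2 s h, List.mem_append]
        constructor
        · rintro (⟨ψ', hψ', hs⟩ | ⟨ψ', hψ', hs⟩)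
          · exact ⟨ψ', Or.inl hψ', hs⟩
          · exact ⟨ψ', Or.inr hψ', hs⟩
        · rintro ⟨ψ', hψ' | hψ', hs⟩
          · exact Or.inl ⟨ψ', hψ', hs⟩
          · exact Or.inr ⟨ψ', hψ', hs⟩
  | ex x φ ih =>
      obtain ⟨l, hsh, heq⟩ := ih
      refine ⟨l.map (.ex x), ?_, fun s h => ?_⟩
      · intro ψ' hψ'
        obtain ⟨ψ, hψ, rfl⟩ := List.mem_map.mp hψ'
        exact .ex x (hsh ψ hψ)
      · simp only [Sat, List.mem_map]
        constructor
        · rintro ⟨ℓ, hs⟩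
          obtain ⟨ψ, hψ, hs⟩ := (heq _ h).mp hs
          exact ⟨.ex x ψ, ⟨ψ, hψ, rfl⟩, ℓ, hs⟩
        · rintro ⟨_, ⟨ψ, hψ, rfl⟩, ℓ, hs⟩
          exact ⟨ℓ, (heq _ h).mpr ⟨ψ, hψ, hs⟩⟩
end

section
/- If the Post Correspondence Problem instance (u₁,…,u_n), (v₁,…,v_m) over a finite alphabet has a solution, i.e. there exists a nonempty sequence i₁,…,i_k with each i_j ∈ {1,…,n} and u_{i₁}⋯u_{i_k} = v_{i₁}⋯v_{i_k} (where n = m and the same indices are used for both families), then there exist positions p₁,…,p_N and q₁,…,q_N in the set P = {(i,j) | 1 ≤ i ≤ n, 1 ≤ j ≤ |u_i| resp. |v_i|} such that: p₁ = q₁ = (i₁,1); u(p_l) = v(q_l) for all l; p_l →ᵘ p_{l+1} and q_l →ᵛ q_{l+1} for all l < N; p_N = (i_k, |u_{i_k}|) and q_N = (i_k, |v_{i_k}|). -/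
/-- The character of the word family `w` at position `p = (i,j)`
(0-indexed): the `j`-th character of `w i`, if defined. -/
def wchar {n : ℕ} {A : Type} (w : Fin n → List A) (p : Fin n × ℕ) : Option A :=
  (w p.1)[p.2]?

/-- The step relation on positions: from `(i,j)` either move to the next
character of the same word, or, if `(i,j)` is the last position of `w i`,
jump to the first position of an arbitrary word. -/
def Step {n : ℕ} {A : Type} (w : Fin n → List A) (p p' : Fin n × ℕ) : Prop :=
  (p'.1 = p.1 ∧ p.2 + 1 < (w p.1).length ∧ p'.2 = p.2 + 1) ∨
  (p.2 + 1 = (w p.1).length ∧ p'.2 = 0)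

def pos {n : ℕ} {A : Type} (w : Fin n → List A) (d : Fin n × ℕ) :
    List (Fin n) → ℕ → Fin n × ℕ
  | [], _ => d
  | i :: rest, l =>
    if l < (w i).length then (i, l) else pos w d rest (l - (w i).length)

lemma pos_spec {n : ℕ} {A : Type} (w : Fin n → List A) (d : Fin n × ℕ) :
    ∀ (is : List (Fin n)) (l : ℕ), l < ((is.map w).flatten).length →
      (pos w d is l).2 < (w (pos w d is l).1).length ∧
      wchar w (pos w d is l) = ((is.map w).flatten)[l]?
  | [], l, h => by simp at h
  | i :: rest, l, h => by
    simp only [List.map_cons, List.flatten_cons, List.length_append] at h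
    by_cases hl : l < (w i).length
    · simp only [pos, if_pos hl]
      refine ⟨hl, ?_⟩
      simp only [wchar]
      exact (List.getElem?_append_left hl).symm
    · simp only [pos, if_neg hl]
      push_neg at hl
      have h' : l - (w i).length < ((rest.map w).flatten).length := by omega
      refine ⟨(pos_spec w d rest _ h').1, ?_⟩
      rw [(pos_spec w d rest _ h').2]
      exact (List.getElem?_append_right hl).symm

lemma pos_zero_snd {n : ℕ} {A : Type} (w : Fin n → List A) (hw : ∀ i, w i ≠ [])
    (d : Fin n × ℕ) (hd : d.2 = 0) (is : List (Fin n)) : (pos w d is 0).2 = 0 := by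
  cases is with
  | nil => exact hd
  | cons i rest =>
    have : 0 < (w i).length := List.length_pos_iff.mpr (hw i)
    simp [pos, this]

lemma pos_step {n : ℕ} {A : Type} (w : Fin n → List A) (hw : ∀ i, w i ≠ [])
    (d : Fin n × ℕ) (hd : d.2 = 0) :
    ∀ (is : List (Fin n)) (l : ℕ), l + 1 < ((is.map w).flatten).length →
      Step w (pos w d is l) (pos w d is (l + 1))
  | [], l, h => by simp at h
  | i :: rest, l, h => by
    simp only [List.map_cons, List.flatten_cons, List.length_append] at h
    by_cases hl : l + 1 < (w i).length
    · have hl' : l < (w i).length := by omega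
      simp only [pos, if_pos hl, if_pos hl']
      exact Or.inl ⟨rfl, hl, rfl⟩
    · by_cases hl2 : l < (w i).length
      · -- l + 1 = (w i).length
        have hle : l + 1 = (w i).length := by omega
        simp only [pos, if_pos hl2, if_neg hl]
        refine Or.inr ⟨hle, ?_⟩
        have : l + 1 - (w i).length = 0 := by omega
        rw [this]
        exact pos_zero_snd w hw d hd rest
      · push_neg at hl2
        simp only [pos, if_neg hl, if_neg (by omega : ¬ l < (w i).length)]
        have h' : (l - (w i).length) + 1 < ((rest.map w).flatten).length := by omega
        have he : l + 1 - (w i).length = (l - (w i).length) + 1 := by omega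
        rw [he]
        exact pos_step w hw d hd rest _ h'

lemma pos_last {n : ℕ} {A : Type} (w : Fin n → List A) (hw : ∀ i, w i ≠ [])
    (d : Fin n × ℕ) :
    ∀ (is : List (Fin n)) (his : is ≠ []) (l : ℕ),
      l + 1 = ((is.map w).flatten).length →
      (pos w d is l).1 = is.getLast his ∧
      (pos w d is l).2 + 1 = (w (pos w d is l).1).length
  | [], his, _, _ => absurd rfl his
  | i :: rest, his, l, h => by
    simp only [List.map_cons, List.flatten_cons, List.length_append] at h
    cases rest with
    | nil =>
      simp only [List.map_nil, List.flatten_nil, List.length_nil, add_zero] at h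
      have hl : l < (w i).length := by omega
      simp only [pos, if_pos hl]
      exact ⟨by simp, h⟩
    | cons j rest' =>
      have hpos : 0 < (((j :: rest').map w).flatten).length := by
        have : 0 < (w j).length := List.length_pos_iff.mpr (hw j)
        simp only [List.map_cons, List.flatten_cons, List.length_append]
        omega
      have hl : ¬ l < (w i).length := by omega
      simp only [pos, if_neg hl]
      have h' : (l - (w i).length) + 1 = (((j :: rest').map w).flatten).length := by omega
      have := pos_last w hw d (j :: rest') (by simp) _ h'
      rw [List.getLast_cons (by simp)]
      exact this

/-- A PCP solution yields a pair of synchronized chains of positions. -/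
theorem pcp_solution_to_chains {n : ℕ} {A : Type}
    (u v : Fin n → List A)
    (hu : ∀ i, u i ≠ []) (hv : ∀ i, v i ≠ [])
    (is : List (Fin n)) (his : is ≠ [])
    (hsol : (is.map u).flatten = (is.map v).flatten) :
    ∃ (N : ℕ) (p q : ℕ → Fin n × ℕ),
      1 ≤ N ∧ N = ((is.map u).flatten).length ∧
      p 0 = (is.head his, 0) ∧ q 0 = (is.head his, 0) ∧
      (∀ l < N, (p l).2 < (u (p l).1).length ∧ (q l).2 < (v (q l).1).length) ∧
      (∀ l < N, wchar u (p l) = wchar v (q l)) ∧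
      (∀ l, l + 1 < N → Step u (p l) (p (l + 1)) ∧ Step v (q l) (q (l + 1))) ∧
      (p (N - 1)).1 = (q (N - 1)).1 ∧
      (p (N - 1)).2 + 1 = (u (p (N - 1)).1).length ∧
      (q (N - 1)).2 + 1 = (v (q (N - 1)).1).length := by
  obtain ⟨i, rest, rfl⟩ : ∃ i rest, is = i :: rest := by
    cases is with
    | nil => exact absurd rfl his
    | cons a b => exact ⟨a, b, rfl⟩
  set is := i :: rest with his_def
  set d : Fin n × ℕ := (is.head his, 0) with hd_def
  set N := ((is.map u).flatten).length with hN
  have hNv : N = ((is.map v).flatten).length := by rw [hN, hsol]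
  have hN1 : 1 ≤ N := by
    have : 0 < (u i).length := List.length_pos_iff.mpr (hu i)
    simp only [hN, his_def, List.map_cons, List.flatten_cons, List.length_append]
    omega
  refine ⟨N, pos u d is, pos v d is, hN1, rfl, ?_, ?_, ?_, ?_, ?_, ?_, ?_, ?_⟩
  · have : 0 < (u i).length := List.length_pos_iff.mpr (hu i)
    simp [pos, his_def, this, hd_def]
  · have : 0 < (v i).length := List.length_pos_iff.mpr (hv i)
    simp [pos, his_def, this, hd_def]
  · intro l hl
    exact ⟨(pos_spec u d is l (hN ▸ hl)).1, (pos_spec v d is l (hNv ▸ hl)).1⟩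
  · intro l hl
    rw [(pos_spec u d is l (hN ▸ hl)).2, (pos_spec v d is l (hNv ▸ hl)).2, hsol]
  · intro l hl
    exact ⟨pos_step u hu d rfl is l (hN ▸ hl), pos_step v hv d rfl is l (hNv ▸ hl)⟩
  · have h1 := pos_last u hu d is his (N - 1) (by omega)
    have h2 := pos_last v hv d is his (N - 1) (by omega)
    rw [h1.1, h2.1]
  · exact (pos_last u hu d is his (N - 1) (by omega)).2
  · exact (pos_last v hv d is his (N - 1) (by omega)).2
end

section
/- Conversely to the previous encoding: if there exist sequences of positions p₁,…,p_N and q₁,…,q_N with p₁ = q₁ ∈ B (i.e., of the form (i,1)), u(p_l) = v(q_l) for all l, p_l →ᵘ p_{l+1} and q_l →ᵛ q_{l+1} for all l < N, p_N ∈ E_u and q_N ∈ E_v with p_N = (i, |u_i|) and q_N = (i, |v_i|) for the same i, then there exist index sequences (i₁,…,i_k) and (j₁,…,j_{k'}) such that u_{i₁}⋯u_{i_k} = u(p₁)⋯u(p_N) = v(q₁)⋯v(q_N) = v_{j₁}⋯v_{j_{k'}}, with i₁ = j₁ and i_k = j_{k'}. -/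
lemma chain_decode {n : ℕ} {A : Type} (w : Fin n → List A) :
    ∀ N, 1 ≤ N → ∀ p : ℕ → Fin n × ℕ,
    (p 0).2 = 0 →
    (∀ l < N, (p l).2 < (w (p l).1).length) →
    (∀ l, l + 1 < N → Step w (p l) (p (l + 1))) →
    (p (N - 1)).2 + 1 = (w (p (N - 1)).1).length →
    ∃ is : List (Fin n), is ≠ [] ∧ is.head? = some (p 0).1 ∧
      is.getLast? = some (p (N - 1)).1 ∧
      ((is.map w).flatten).length = N ∧
      (∀ l < N, ((is.map w).flatten)[l]? = wchar w (p l)) := by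
  intro N
  induction N using Nat.strong_induction_on with
  | _ N ih =>
    intro hN p h0 hvalid hstep hend
    set i := (p 0).1 with hi
    set L := (w i).length with hL
    have hL1 : 0 < L := by
      have := hvalid 0 hN
      rw [h0] at this
      exact lt_of_le_of_lt (Nat.zero_le _) this
    have key : ∀ l, l < N → l < L → p l = (i, l) := by
      intro l
      induction l with
      | zero =>
        intro _ _
        exact Prod.ext rfl h0
      | succ m ihm =>
        intro hmN hmL
        have hpm : p m = (i, m) := ihm (by omega) (by omega)
        rcases (hstep m hmN) with h | h
        · obtain ⟨h1, _, h3⟩ := h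
          rw [hpm] at h1 h3
          exact Prod.ext h1 h3
        · exfalso
          rw [hpm] at h
          simp only at h
          omega
    by_cases hNL : N ≤ L
    · -- single word
      have hp : p (N - 1) = (i, N - 1) := key (N - 1) (by omega) (by omega)
      have hNeL : N = L := by
        rw [hp] at hend
        simp only at hend
        omega
      refine ⟨[i], by simp, by simp, ?_, ?_, ?_⟩
      · simp [hp]
      · simp [← hL, hNeL]
      · intro l hl
        rw [key l hl (by omega)]
        simp [wchar]
    · push_neg at hNL
      have hstepL : Step w (p (L - 1)) (p (L - 1 + 1)) := hstep (L - 1) (by omega)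
      have hpL1 : p (L - 1) = (i, L - 1) := key (L - 1) (by omega) (by omega)
      have hL0 : (p L).2 = 0 := by
        rcases hstepL with h | h
        · exfalso
          rw [hpL1] at h
          simp only at h
          omega
        · have : L - 1 + 1 = L := by omega
          rw [this] at h
          exact h.2
      obtain ⟨is', hne', hhd', hlast', hlen', hget'⟩ :=
        ih (N - L) (by omega) (by omega) (fun l => p (l + L))
          (by simpa using hL0)
          (fun l hl => hvalid (l + L) (by omega))
          (fun l hl => by
            have := hstep (l + L) (by omega)
            have he : l + 1 + L = l + L + 1 := by omega
            show Step w (p (l + L)) (p (l + 1 + L))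
            rw [he]; exact this)
          (by
            have he : N - L - 1 + L = N - 1 := by omega
            show (p (N - L - 1 + L)).2 + 1 = (w (p (N - L - 1 + L)).1).length
            rw [he]; exact hend)
      refine ⟨i :: is', by simp, by simp, ?_, ?_, ?_⟩
      · cases is' with
        | nil => exact absurd rfl hne'
        | cons a t =>
          rw [List.getLast?_cons_cons]
          have he : N - L - 1 + L = N - 1 := by omega
          rw [hlast', he]
      · simp only [List.map_cons, List.flatten_cons, List.length_append, ← hL]
        omega
      · intro l hl
        simp only [List.map_cons, List.flatten_cons]
        by_cases hlL : l < L
        · rw [List.getElem?_append_left (by rw [← hL]; exact hlL)]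
          rw [key l (by omega) hlL]
          simp [wchar]
        · push_neg at hlL
          rw [List.getElem?_append_right (by rw [← hL]; exact hlL)]
          rw [← hL]
          have := hget' (l - L) (by omega)
          rw [this]
          have he : l - L + L = l := by omega
          rw [he]

/-- Decoding a pair of chains of positions into index sequences: the
concatenations of the traversed words coincide, with matching first and
last indices (but the two index sequences may differ). -/
theorem chains_to_words {n : ℕ} {A : Type}
    (u v : Fin n → List A)
    (N : ℕ) (hN : 1 ≤ N) (p q : ℕ → Fin n × ℕ)
    (hinit : p 0 = q 0) (hinit0 : (p 0).2 = 0)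
    (hvalid : ∀ l < N,
      (p l).2 < (u (p l).1).length ∧ (q l).2 < (v (q l).1).length)
    (hchar : ∀ l < N, wchar u (p l) = wchar v (q l))
    (hstep : ∀ l, l + 1 < N → Step u (p l) (p (l + 1)) ∧ Step v (q l) (q (l + 1)))
    (hendi : (p (N - 1)).1 = (q (N - 1)).1)
    (hendu : (p (N - 1)).2 + 1 = (u (p (N - 1)).1).length)
    (hendv : (q (N - 1)).2 + 1 = (v (q (N - 1)).1).length) :
    ∃ is js : List (Fin n),
      is ≠ [] ∧ js ≠ [] ∧
      (is.map u).flatten = (js.map v).flatten ∧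
      ((is.map u).flatten).length = N ∧
      (∀ l < N, ((is.map u).flatten)[l]? = wchar u (p l)) ∧
      is.head? = js.head? ∧ is.getLast? = js.getLast? := by
  obtain ⟨is, hisne, hishd, hislast, hislen, hisget⟩ :=
    chain_decode u N hN p hinit0 (fun l hl => (hvalid l hl).1)
      (fun l hl => (hstep l hl).1) hendu
  obtain ⟨js, hjsne, hjshd, hjslast, hjslen, hjsget⟩ :=
    chain_decode v N hN q (by rw [← hinit]; exact hinit0)
      (fun l hl => (hvalid l hl).2) (fun l hl => (hstep l hl).2) hendv
  have heq : (is.map u).flatten = (js.map v).flatten := by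
    apply List.ext_getElem?
    intro l
    by_cases hl : l < N
    · rw [hisget l hl, hjsget l hl, hchar l hl]
    · push_neg at hl
      rw [List.getElem?_eq_none_iff.mpr (by omega), List.getElem?_eq_none_iff.mpr (by omega)]
  exact ⟨is, js, hisne, hjsne, heq, hislen, hisget,
    by rw [hishd, hjshd, hinit], by rw [hislast, hjslast, hendi]⟩
end

section
/- If additionally the chains are synchronized at word boundaries, the decoded index sequences coincide: in the setting of the previous lemma, suppose furthermore that for every l, p_l ∈ B iff q_l ∈ B, and whenever p_l = (i,1) and q_l = (i',1) are both in B then i = i'. Then k = k', (i₁,…,i_k) = (j₁,…,j_{k'}), and hence the PCP instance has a solution. -/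
lemma filterMap_get?_range {A : Type} (L : List A) :
    (List.range L.length).filterMap (fun l => L[l]?) = L := by
  induction L with
  | nil => simp
  | cons a L ih =>
    rw [List.length_cons, List.range_succ_eq_map, List.filterMap_cons, List.filterMap_map]
    have h1 : (a :: L)[0]? = some a := rfl
    have h2 : ((fun l => (a :: L)[l]?) ∘ Nat.succ) = fun l => L[l]? := by
      funext l; simp
    rw [h1, h2, ih]

lemma filter_range_eq_zero {P : ℕ → Bool} (N : ℕ) (hN : 1 ≤ N)
    (h : ∀ l < N, P l = decide (l = 0)) : (List.range N).filter P = [0] := by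
  rw [List.filter_congr (fun x hx => h x (List.mem_range.mp hx))]
  obtain ⟨M, rfl⟩ : ∃ M, N = M + 1 := ⟨N - 1, by omega⟩
  rw [List.range_succ_eq_map, List.filter_cons]
  simp [List.filter_map, Function.comp_def]

lemma spell {n : ℕ} {A : Type} (w : Fin n → List A) :
    ∀ N, 1 ≤ N → ∀ (p : ℕ → Fin n × ℕ),
    (p 0).2 = 0 →
    (∀ l < N, (p l).2 < (w (p l).1).length) →
    (∀ l, l + 1 < N → Step w (p l) (p (l + 1))) →
    (p (N - 1)).2 + 1 = (w (p (N - 1)).1).length →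
    (((((List.range N).filter (fun l => (p l).2 = 0)).map (fun l => (p l).1)).map w).flatten)
      = (List.range N).filterMap (fun l => wchar w (p l)) := by
  intro N
  induction N using Nat.strong_induction_on with
  | _ N IH =>
    intro hN p h0 hvalid hstep hend
    set i0 := (p 0).1 with hi0
    set m := (w i0).length with hm
    have hm1 : 1 ≤ m := by
      have h := hvalid 0 hN
      rw [hm, hi0]
      omega
    have hpl : ∀ l, l < m → l < N → p l = (i0, l) := by
      intro l
      induction l with
      | zero => intro _ _; exact Prod.ext rfl h0
      | succ l ih =>
        intro hlm hlN
        have hl := ih (by omega) (by omega)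
        rcases hstep l (by omega) with ⟨ha, hb, hc⟩ | ⟨ha, hb⟩
        · rw [hl] at ha hc
          exact Prod.ext ha hc
        · rw [hl] at ha
          have ha' : l + 1 = m := ha
          omega
    have hseg : m ≤ N → (List.range m).filterMap (fun l => wchar w (p l)) = w i0 := by
      intro hmle
      have hc : ∀ x ∈ List.range m, wchar w (p x) = (w i0)[x]? := by
        intro x hx
        rw [hpl x (List.mem_range.mp hx) (lt_of_lt_of_le (List.mem_range.mp hx) hmle)]
        rfl
      rw [List.filterMap_congr hc, hm]
      exact filterMap_get?_range (w i0)
    rcases le_or_gt N m with hNe | hNe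
    · have hNm : N = m := by
        have h := hend
        rw [hpl (N - 1) (by omega) (by omega)] at h
        have h' : (N - 1) + 1 = m := h
        omega
      have hfil : (List.range N).filter (fun l => decide ((p l).2 = 0)) = [0] := by
        apply filter_range_eq_zero N hN
        intro l hl
        rw [hpl l (by omega) hl]
      rw [hfil, hNm, hseg (le_of_eq hNm.symm)]
      simp [hi0]
    · have hm' : m - 1 + 1 = m := by omega
      have hBm : (p m).2 = 0 := by
        have hs := hstep (m - 1) (by omega)
        rw [hm'] at hs
        rcases hs with ⟨ha, hb, hc⟩ | ⟨ha, hb⟩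
        · rw [hpl (m - 1) (by omega) (by omega)] at hb
          have hb' : m - 1 + 1 < m := hb
          omega
        · exact hb
      have hadd : N = m + (N - m) := by omega
      have IHres := IH (N - m) (by omega) (by omega) (fun l => p (m + l))
        hBm
        (fun l hl => hvalid (m + l) (by omega))
        (fun l hl => hstep (m + l) (by omega))
        (by
          show (p (m + (N - m - 1))).2 + 1 = (w (p (m + (N - m - 1))).1).length
          rw [show m + (N - m - 1) = N - 1 from by omega]
          exact hend)
      rw [hadd, List.range_add, List.filter_append, List.filterMap_append]
      have hfil1 : (List.range m).filter (fun l => decide ((p l).2 = 0)) = [0] := by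
        apply filter_range_eq_zero m hm1
        intro l hl
        rw [hpl l hl (by omega)]
      rw [hfil1, List.filter_map, List.filterMap_map, hseg (by omega)]
      simp only [Function.comp_def, List.map_map, List.map_cons, List.map_nil,
        List.singleton_append, List.flatten_cons]
      rw [← hi0]
      congr 1
      simpa [Function.comp_def] using IHres

/-- If the two chains are moreover synchronized at word boundaries
(`B`-positions, i.e. positions with second component 0, occur at the same
chain indices and carry the same word index), then the decoded index
sequences coincide and the PCP instance has a solution. -/
theorem synchronized_chains_give_pcp_solution {n : ℕ} {A : Type}
    (u v : Fin n → List A)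
    (N : ℕ) (hN : 1 ≤ N) (p q : ℕ → Fin n × ℕ)
    (hinit : p 0 = q 0) (hinit0 : (p 0).2 = 0)
    (hvalid : ∀ l < N,
      (p l).2 < (u (p l).1).length ∧ (q l).2 < (v (q l).1).length)
    (hchar : ∀ l < N, wchar u (p l) = wchar v (q l))
    (hstep : ∀ l, l + 1 < N → Step u (p l) (p (l + 1)) ∧ Step v (q l) (q (l + 1)))
    (hendi : (p (N - 1)).1 = (q (N - 1)).1)
    (hendu : (p (N - 1)).2 + 1 = (u (p (N - 1)).1).length)
    (hendv : (q (N - 1)).2 + 1 = (v (q (N - 1)).1).length)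
    (hsyncB : ∀ l < N, (p l).2 = 0 ↔ (q l).2 = 0)
    (hsyncIdx : ∀ l < N, (p l).2 = 0 → (q l).2 = 0 → (p l).1 = (q l).1) :
    (((List.range N).filter (fun l => (p l).2 = 0)).map (fun l => (p l).1)) =
      (((List.range N).filter (fun l => (q l).2 = 0)).map (fun l => (q l).1)) ∧
    ∃ is : List (Fin n),
      is = ((List.range N).filter (fun l => (p l).2 = 0)).map (fun l => (p l).1) ∧
      is ≠ [] ∧ (is.map u).flatten = (is.map v).flatten := by
  have hq0 : (q 0).2 = 0 := by rw [← hinit]; exact hinit0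
  have hfilEq : (List.range N).filter (fun l => (p l).2 = 0)
      = (List.range N).filter (fun l => (q l).2 = 0) := by
    apply List.filter_congr
    intro x hx
    have h := hsyncB x (List.mem_range.mp hx)
    simp [h]
  have hmapEq : (((List.range N).filter (fun l => (p l).2 = 0)).map (fun l => (p l).1))
      = (((List.range N).filter (fun l => (q l).2 = 0)).map (fun l => (q l).1)) := by
    rw [← hfilEq]
    apply List.map_congr_left
    intro x hx
    rw [List.mem_filter, List.mem_range] at hx
    obtain ⟨hx1, hx2⟩ := hx
    have hp0 : (p x).2 = 0 := by simpa using hx2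
    exact hsyncIdx x hx1 hp0 ((hsyncB x hx1).mp hp0)
  refine ⟨hmapEq, _, rfl, ?_, ?_⟩
  · have h0mem : 0 ∈ (List.range N).filter (fun l => (p l).2 = 0) := by
      rw [List.mem_filter]
      exact ⟨List.mem_range.mpr hN, by simpa using hinit0⟩
    exact List.ne_nil_of_mem (List.mem_map_of_mem h0mem)
  · have hu := spell u N hN p hinit0 (fun l hl => (hvalid l hl).1)
      (fun l hl => (hstep l hl).1) hendu
    have hv := spell v N hN q hq0 (fun l hl => (hvalid l hl).2)
      (fun l hl => (hstep l hl).2) hendv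
    rw [hu, hmapEq, hv]
    exact List.filterMap_congr (fun x hx => hchar x (List.mem_range.mp hx))
end
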